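/- Let F be a metrizable locally convex topological vector space over ℝ, and let (xₙ) be a sequence in F converging to x ∈ F. Then there exists a strictly increasing function φ : ℕ → ℕ such that the subsequence (x_{φ(j)}) converges rapidly to x, i.e. for every k ∈ ℕ, the set { (j : ℝ)^k • (x_{φ(j)} − x) | j ∈ ℕ } is von Neumann bounded in F. -/

import Mathlib

/-! Choose `φ j` so far out that `j ^ j • (x_{φ j} - x)` lies in the `j`-th member of a countable
neighbourhood basis of `0`; then `j ^ j • (x_{φ j} - x) → 0`, and for each fixed `k` the factor
`j ^ k / j ^ j` tends to `0`, so `j ^ k • (x_{φ j} - x) → 0`. A convergent sequence is bounded. -/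

open Filter Topology

theorem Filter.exists_strictMono_tendsto_diag {α : Type*} {l : Filter α} [l.IsCountablyGenerated]
    {u : ℕ → ℕ → α} (hu : ∀ j, Tendsto (u j) atTop l) :
    ∃ φ : ℕ → ℕ, StrictMono φ ∧ Tendsto (fun j => u j (φ j)) atTop l := by
  obtain ⟨B, hB⟩ := l.exists_antitone_basis
  obtain ⟨φ, hφ, hmem⟩ := extraction_forall_of_eventually fun j => (hu j).eventually_mem (hB.mem j)
  exact ⟨φ, hφ, hB.tendsto hmem⟩

theorem tendsto_natCast_pow_div_self_pow (k : ℕ) :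
    Tendsto (fun j : ℕ => (j : ℝ) ^ k / (j : ℝ) ^ j) atTop (𝓝 0) := by
  refine squeeze_zero' (Eventually.of_forall fun j => by positivity) ?_
    tendsto_one_div_atTop_nhds_zero_nat
  filter_upwards [eventually_ge_atTop (k + 1)] with j hj
  have hj1 : (1 : ℝ) ≤ j := by exact_mod_cast le_of_add_le_right hj
  rw [div_le_div_iff₀ (by positivity) (by positivity), one_mul, ← pow_succ]
  exact pow_le_pow_right₀ hj1 hj

theorem tendsto_natCast_pow_smul_of_tendsto_self_pow_smul {E : Type*} [AddCommGroup E]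
    [Module ℝ E] [TopologicalSpace E] [ContinuousSMul ℝ E] {v : ℕ → E}
    (hv : Tendsto (fun j : ℕ => (j : ℝ) ^ j • v j) atTop (𝓝 0)) (k : ℕ) :
    Tendsto (fun j : ℕ => (j : ℝ) ^ k • v j) atTop (𝓝 0) := by
  have h := (tendsto_natCast_pow_div_self_pow k).smul hv
  rw [zero_smul] at h
  refine h.congr fun j => ?_
  have hj : (j : ℝ) ^ j ≠ 0 := by exact_mod_cast (Nat.pow_self_pos (n := j)).ne'
  rw [smul_smul, div_mul_cancel₀ _ hj]

theorem rapidly_converging_subsequence_general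
    {F : Type*} [AddCommGroup F] [Module ℝ F] [TopologicalSpace F]
    [IsTopologicalAddGroup F] [ContinuousSMul ℝ F]
    [TopologicalSpace.MetrizableSpace F]
    (x : F) (xn : ℕ → F) (hx : Filter.Tendsto xn Filter.atTop (nhds x)) :
    ∃ φ : ℕ → ℕ, StrictMono φ ∧
      ∀ k : ℕ, Bornology.IsVonNBounded ℝ
        (Set.range fun j : ℕ => (j : ℝ) ^ k • (xn (φ j) - x)) := by
  have h0 : Tendsto (fun n => xn n - x) atTop (𝓝 0) := tendsto_sub_nhds_zero_iff.mpr hx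
  obtain ⟨φ, hφ, hfast⟩ := exists_strictMono_tendsto_diag
    (u := fun j n => (j : ℝ) ^ j • (xn n - x)) fun j => by simpa using h0.const_smul ((j : ℝ) ^ j)
  exact ⟨φ, hφ, fun k =>
    (tendsto_natCast_pow_smul_of_tendsto_self_pow_smul hfast k).isVonNBounded_range ℝ⟩

/-- Lemma A.5: every convergent sequence in a metrizable locally convex real topological
vector space has a subsequence converging rapidly, i.e. such that for every `k`, the set
`{ j^k • (x_{φ j} - x) }` is von Neumann bounded. -/
theorem rapidly_converging_subsequence
    {F : Type*} [AddCommGroup F] [Module ℝ F] [TopologicalSpace F]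
    [IsTopologicalAddGroup F] [ContinuousSMul ℝ F] [LocallyConvexSpace ℝ F]
    [TopologicalSpace.MetrizableSpace F]
    (x : F) (xn : ℕ → F) (hx : Filter.Tendsto xn Filter.atTop (nhds x)) :
    ∃ φ : ℕ → ℕ, StrictMono φ ∧
      ∀ k : ℕ, Bornology.IsVonNBounded ℝ
        (Set.range fun j : ℕ => (j : ℝ) ^ k • (xn (φ j) - x)) :=
  rapidly_converging_subsequence_general x xn hx
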